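/- arXiv:1603.01546 — 3 statements merged into one kernel-verified Lean document; each statement's English description precedes it below -/
import Mathlib

section
/- Let ρ, S, X be d×d complex matrices with ρ Hermitian positive semidefinite, and let β, ω be real numbers such that ρ·S = e^{βω}·(S·ρ). Define L(X) = ½(S†·[X,S] + [S†,X]·S) + ½e^{−βω}·(S·[X,S†] + [S,X]·S†). Then −trace(ρ·X†·L(X)) is a nonnegative real number. Consequently, any nonnegative linear combination Σ_{α,ω} h_α(ω)·L_{α,ω} of such terms (with h_α(ω) ≥ 0) satisfies −⟨X, L(X)⟩_β := −trace(ρ·X†·L(X)) ≥ 0 for every X. -/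
open Matrix
open scoped ComplexOrder

/-!
Detailed balance `ρS = e^{βω}Sρ` (and its adjoint `ρS† = e^{−βω}S†ρ`) lets `S` and `S†` be
moved across `ρ` inside a trace at the cost of a factor `e^{±βω}`. This turns
`−tr(ρX†L(X))` into `½ tr(ρA†A) + ½e^{−βω} tr(ρB†B)` with `A = [X,S]`, `B = [X,S†]`, and
`tr(ρA†A) = tr(AρA†) ≥ 0` for positive semidefinite `ρ`.
-/

/-- One `(α, ω)`-term of the Davies–Lindblad generator in the Heisenberg picture:
`L(X) = ½(S†[X,S] + [S†,X]S) + ½e^{−βω}(S[X,S†] + [S,X]S†)`, where `c = e^{−βω}`. -/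
noncomputable def lindbladTerm {d : ℕ} (S : Matrix (Fin d) (Fin d) ℂ) (c : ℂ)
    (X : Matrix (Fin d) (Fin d) ℂ) : Matrix (Fin d) (Fin d) ℂ :=
  (2⁻¹ : ℂ) • (Sᴴ * (X * S - S * X) + (Sᴴ * X - X * Sᴴ) * S) +
    ((2⁻¹ : ℂ) * c) • (S * (X * Sᴴ - Sᴴ * X) + (S * X - X * S) * Sᴴ)

namespace Matrix

variable {n : Type*} [Fintype n]

theorem trace_mul_mul_eq_of_mul_eq_smul {R : Type*} [CommSemiring R] {ρ S : Matrix n n R} {e : R}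
    (h : ρ * S = e • (S * ρ)) (M : Matrix n n R) :
    trace (ρ * (S * M)) = e * trace (ρ * (M * S)) := by
  rw [← Matrix.mul_assoc, h, smul_mul, trace_smul, smul_eq_mul, Matrix.mul_assoc,
    trace_mul_comm S, Matrix.mul_assoc]

theorem IsHermitian.mul_conjTranspose_eq_smul {ρ S : Matrix n n ℂ} (hρ : ρ.IsHermitian)
    {e : ℝ} (he : e ≠ 0) (h : ρ * S = (e : ℂ) • (S * ρ)) :
    ρ * Sᴴ = ((e⁻¹ : ℝ) : ℂ) • (Sᴴ * ρ) := by
  have h' : Sᴴ * ρ = (e : ℂ) • (ρ * Sᴴ) := by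
    simpa [conjTranspose_mul, hρ.eq] using congrArg (·ᴴ) h
  rw [h', smul_smul, Complex.ofReal_inv, inv_mul_cancel₀ (by exact_mod_cast he), one_smul]

theorem PosSemidef.trace_mul_conjTranspose_mul_self_nonneg {𝕜 : Type*} [RCLike 𝕜]
    {ρ : Matrix n n 𝕜} (hρ : ρ.PosSemidef) (A : Matrix n n 𝕜) : 0 ≤ trace (ρ * (Aᴴ * A)) := by
  rw [← Matrix.mul_assoc, trace_mul_cycle]
  exact (hρ.mul_mul_conjTranspose_same A).trace_nonneg

end Matrix

section lindbladTerm

variable {d : ℕ} {ρ S : Matrix (Fin d) (Fin d) ℂ}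

theorem neg_trace_mul_lindbladTerm_eq {e c : ℂ} (hS : ρ * S = e • (S * ρ))
    (hSd : ρ * Sᴴ = c • (Sᴴ * ρ)) (hce : c * e = 1) (X : Matrix (Fin d) (Fin d) ℂ) :
    -trace (ρ * Xᴴ * lindbladTerm S c X) =
      2⁻¹ * trace (ρ * ((X * S - S * X)ᴴ * (X * S - S * X))) +
        c * 2⁻¹ * trace (ρ * ((X * Sᴴ - Sᴴ * X)ᴴ * (X * Sᴴ - Sᴴ * X))) := by
  have E1 := trace_mul_mul_eq_of_mul_eq_smul hSd (Xᴴ * (X * S))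
  have E2 := trace_mul_mul_eq_of_mul_eq_smul hS (Xᴴ * (Sᴴ * X))
  have E3 := trace_mul_mul_eq_of_mul_eq_smul hSd (Xᴴ * (S * X))
  have E4 := trace_mul_mul_eq_of_mul_eq_smul hS (Xᴴ * (X * Sᴴ))
  simp only [lindbladTerm, conjTranspose_sub, conjTranspose_mul, conjTranspose_conjTranspose,
    Matrix.mul_sub, Matrix.sub_mul, Matrix.mul_add, Matrix.mul_smul,
    trace_add, trace_sub, trace_smul, smul_eq_mul, Matrix.mul_assoc] at E1 E2 E3 E4 ⊢
  linear_combination (-(2⁻¹ : ℂ)) * E1 + (2⁻¹ : ℂ) * E3 + c * 2⁻¹ * E2 - c * 2⁻¹ * E4 +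
    (2⁻¹ * trace (ρ * (Xᴴ * (Sᴴ * (X * S)))) - 2⁻¹ * trace (ρ * (Xᴴ * (X * (Sᴴ * S))))) * hce

theorem neg_trace_mul_lindbladTerm_nonneg (hρ : ρ.PosSemidef) {e : ℝ} (he : 0 < e)
    (hS : ρ * S = (e : ℂ) • (S * ρ)) (X : Matrix (Fin d) (Fin d) ℂ) :
    0 ≤ -trace (ρ * Xᴴ * lindbladTerm S ((e⁻¹ : ℝ) : ℂ) X) := by
  have hce : ((e⁻¹ : ℝ) : ℂ) * e = 1 := by
    rw [← Complex.ofReal_mul, inv_mul_cancel₀ he.ne', Complex.ofReal_one]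
  rw [neg_trace_mul_lindbladTerm_eq hS (hρ.isHermitian.mul_conjTranspose_eq_smul he.ne' hS) hce]
  have hc : (0 : ℂ) ≤ ((e⁻¹ : ℝ) : ℂ) * 2⁻¹ := by positivity
  have h2 : (0 : ℂ) ≤ 2⁻¹ := by positivity
  exact add_nonneg (mul_nonneg h2 (hρ.trace_mul_conjTranspose_mul_self_nonneg _))
    (mul_nonneg hc (hρ.trace_mul_conjTranspose_mul_self_nonneg _))

end lindbladTerm

theorem Complex.exists_ofReal_eq_of_nonneg {z : ℂ} (hz : 0 ≤ z) : ∃ r : ℝ, 0 ≤ r ∧ z = r :=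
  ⟨z.re, hz.1, Complex.ext (by simp) (by simp [← hz.2])⟩

/-- Negativity of the Lindblad super-operator: for a positive semidefinite `ρ` satisfying
detailed balance `ρS = e^{βω}Sρ`, the quantity `−tr(ρ X† L(X))` is a nonnegative real
number; consequently, any nonnegative linear combination of such terms also yields a
nonnegative quadratic form `−⟨X, L(X)⟩_β` for every `X`. -/
theorem lindblad_negativity (d : ℕ) (ρ S X : Matrix (Fin d) (Fin d) ℂ)
    (hρ : ρ.PosSemidef) (β ω : ℝ)
    (hKMS : ρ * S = (Real.exp (β * ω) : ℂ) • (S * ρ)) :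
    (∃ r : ℝ, 0 ≤ r ∧
      -Matrix.trace (ρ * Xᴴ * lindbladTerm S (Real.exp (-(β * ω))) X) = (r : ℂ)) ∧
    (∀ {ι : Type} [Fintype ι] (h : ι → ℝ) (Sf : ι → Matrix (Fin d) (Fin d) ℂ)
      (βf ωf : ι → ℝ),
      (∀ a, 0 ≤ h a) →
      (∀ a, ρ * Sf a = (Real.exp (βf a * ωf a) : ℂ) • (Sf a * ρ)) →
      ∀ Y : Matrix (Fin d) (Fin d) ℂ, ∃ r : ℝ, 0 ≤ r ∧
        -Matrix.trace (ρ * Yᴴ *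
          ∑ a, (h a : ℂ) • lindbladTerm (Sf a) (Real.exp (-(βf a * ωf a))) Y) = (r : ℂ)) := by
  have term_nonneg : ∀ (S Y : Matrix (Fin d) (Fin d) ℂ) (t : ℝ),
      ρ * S = (Real.exp t : ℂ) • (S * ρ) →
        0 ≤ -trace (ρ * Yᴴ * lindbladTerm S (Real.exp (-t)) Y) := fun S Y t hS => by
    have := neg_trace_mul_lindbladTerm_nonneg hρ (Real.exp_pos t) hS Y
    rwa [← Real.exp_neg] at this
  refine ⟨Complex.exists_ofReal_eq_of_nonneg (term_nonneg S X _ hKMS),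
    fun {ι} _ h Sf βf ωf hh hKMSf Y => Complex.exists_ofReal_eq_of_nonneg ?_⟩
  rw [Matrix.mul_sum, trace_sum, ← Finset.sum_neg_distrib]
  refine Finset.sum_nonneg fun a _ => ?_
  rw [Matrix.mul_smul, trace_smul, smul_eq_mul, ← mul_neg]
  exact mul_nonneg (Complex.zero_le_real.2 (hh a)) (term_nonneg (Sf a) Y _ (hKMSf a))
end

section
/- Let ρ, S be d×d complex matrices with ρ Hermitian, and let β, ω be real numbers such that ρ·S = e^{βω}·(S·ρ). Define L(X) = ½(S†·[X,S] + [S†,X]·S) + ½e^{−βω}·(S·[X,S†] + [S,X]·S†). Then L is self-adjoint with respect to the Liouville pairing: for all d×d matrices X and Y, trace(ρ·X†·L(Y)) = trace(ρ·(L(X))†·Y). -/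
/-!
Write `L(X) = S†XS + c·SXS† − ½(KX + XK)` with `K = S†S + c·SS†` and `c = e^{−βω}`.
Detailed balance lets `S` move cyclically past `ρ` at the price of a factor:
`tr(ρ S A) = e^{βω} tr(ρ A S)`, and dually `ρS† = c·S†ρ`. Hence the jump maps
`X ↦ S†XS` and `X ↦ SXS†` are Liouville adjoints of each other up to the factors `c` and
`e^{βω}`, whose product is `1`, so their weighted sum is self-adjoint. Moreover `K` is
Hermitian and commutes with `ρ`, so `X ↦ KX + XK` is self-adjoint as well.
-/

open Matrix

namespace Matrix

variable {n R : Type*} [Fintype n] [CommRing R] {ρ T U : Matrix n n R} {t u : R}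

theorem trace_mul_mul_comm_of_mul_eq_smul_mul (hT : ρ * T = t • (T * ρ)) (A : Matrix n n R) :
    trace (ρ * (T * A)) = t * trace (ρ * (A * T)) := by
  rw [← Matrix.mul_assoc, hT, smul_mul_assoc, trace_smul, smul_eq_mul, Matrix.mul_assoc,
    trace_mul_comm, Matrix.mul_assoc]

theorem commute_mul_of_mul_eq_smul_mul (hT : ρ * T = t • (T * ρ))
    (hU : ρ * U = u • (U * ρ)) (htu : t * u = 1) : Commute ρ (T * U) := by
  change ρ * (T * U) = T * U * ρ
  rw [← Matrix.mul_assoc, hT, smul_mul_assoc, Matrix.mul_assoc, hU, mul_smul_comm, smul_smul,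
    htu, one_smul, Matrix.mul_assoc]

variable [StarRing R]

theorem trace_mul_conjTranspose_sandwich_of_mul_eq_smul_mul (hT : ρ * T = t • (T * ρ))
    (X Y : Matrix n n R) :
    trace (ρ * (T * X * Tᴴ)ᴴ * Y) = t * trace (ρ * Xᴴ * (Tᴴ * Y * T)) := by
  simp only [conjTranspose_mul, conjTranspose_conjTranspose, Matrix.mul_assoc]
  rw [trace_mul_mul_comm_of_mul_eq_smul_mul hT]
  simp only [Matrix.mul_assoc]

theorem mul_conjTranspose_eq_smul_of_mul_eq_smul_mul (hρ : ρᴴ = ρ) (hT : ρ * T = t • (T * ρ))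
    {s : R} (hst : s * star t = 1) : ρ * Tᴴ = s • (Tᴴ * ρ) := by
  have h := congrArg conjTranspose hT
  rw [conjTranspose_mul, conjTranspose_smul, conjTranspose_mul, hρ] at h
  rw [h, smul_smul, hst, one_smul]

theorem trace_mul_anticommutator_of_commute {K : Matrix n n R} (hK : Kᴴ = K) (hρK : Commute ρ K)
    (X Y : Matrix n n R) :
    trace (ρ * Xᴴ * (K * Y + Y * K)) = trace (ρ * (K * X + X * K)ᴴ * Y) := by
  have hcycle : trace (ρ * (Xᴴ * (Y * K))) = trace (ρ * (K * (Xᴴ * Y))) := by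
    rw [← Matrix.mul_assoc Xᴴ, ← Matrix.mul_assoc, trace_mul_comm, ← Matrix.mul_assoc,
      ← hρK.eq, Matrix.mul_assoc]
  simp only [conjTranspose_add, conjTranspose_mul, hK, Matrix.mul_add, Matrix.add_mul, trace_add,
    Matrix.mul_assoc, hcycle]

theorem trace_mul_jump_symm {S : Matrix n n R} {c e : R} (hS : ρ * S = e • (S * ρ))
    (hSH : ρ * Sᴴ = c • (Sᴴ * ρ)) (hce : c * e = 1) (hc : star c = c) (X Y : Matrix n n R) :
    trace (ρ * Xᴴ * (Sᴴ * Y * S + c • (S * Y * Sᴴ))) =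
      trace (ρ * (Sᴴ * X * S + c • (S * X * Sᴴ))ᴴ * Y) := by
  have hS' := trace_mul_conjTranspose_sandwich_of_mul_eq_smul_mul hS X Y
  have hSH' := trace_mul_conjTranspose_sandwich_of_mul_eq_smul_mul hSH X Y
  rw [conjTranspose_conjTranspose] at hSH'
  simp only [conjTranspose_add, conjTranspose_smul, hc, Matrix.mul_add, Matrix.add_mul,
    Matrix.mul_smul, Matrix.smul_mul, trace_add, trace_smul, smul_eq_mul, hS', hSH']
  linear_combination (-trace (ρ * Xᴴ * (Sᴴ * Y * S))) * hce

end Matrix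

theorem lindbladTerm_eq {d : ℕ} (S : Matrix (Fin d) (Fin d) ℂ) (c : ℂ)
    (X : Matrix (Fin d) (Fin d) ℂ) :
    lindbladTerm S c X = Sᴴ * X * S + c • (S * X * Sᴴ) -
      (2⁻¹ : ℂ) • ((Sᴴ * S + c • (S * Sᴴ)) * X + X * (Sᴴ * S + c • (S * Sᴴ))) := by
  simp only [lindbladTerm, Matrix.mul_sub, Matrix.sub_mul, Matrix.mul_add, Matrix.add_mul,
    Matrix.mul_smul, Matrix.smul_mul, Matrix.mul_assoc]
  module

theorem trace_mul_lindbladTerm_symm {d : ℕ} {ρ S : Matrix (Fin d) (Fin d) ℂ} {c e : ℂ}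
    (hρ : ρᴴ = ρ) (hS : ρ * S = e • (S * ρ)) (hce : c * e = 1) (hc : star c = c)
    (X Y : Matrix (Fin d) (Fin d) ℂ) :
    trace (ρ * Xᴴ * lindbladTerm S c Y) = trace (ρ * (lindbladTerm S c X)ᴴ * Y) := by
  have hSH : ρ * Sᴴ = c • (Sᴴ * ρ) := mul_conjTranspose_eq_smul_of_mul_eq_smul_mul hρ hS
    (by rw [← hc, ← star_mul, mul_comm, hce, star_one])
  have hK : (Sᴴ * S + c • (S * Sᴴ))ᴴ = Sᴴ * S + c • (S * Sᴴ) := by simp [hc]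
  have hρK : Commute ρ (Sᴴ * S + c • (S * Sᴴ)) :=
    (commute_mul_of_mul_eq_smul_mul hSH hS hce).add_right
      ((commute_mul_of_mul_eq_smul_mul hS hSH (by rw [mul_comm, hce])).smul_right c)
  simp only [lindbladTerm_eq, conjTranspose_sub, conjTranspose_smul, Matrix.mul_sub,
    Matrix.sub_mul, Matrix.mul_smul, Matrix.smul_mul, trace_sub, trace_smul,
    trace_mul_jump_symm hS hSH hce hc, trace_mul_anticommutator_of_commute hK hρK]
  rw [star_inv₀, star_ofNat]

/-- Self-adjointness of the Lindblad generator with respect to the Liouville pairing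
`⟨A,B⟩_β = tr(ρ A† B)`: under detailed balance `ρS = e^{βω}Sρ`,
`tr(ρ X† L(Y)) = tr(ρ (L(X))† Y)` for all `X`, `Y`. -/
theorem lindblad_self_adjoint (d : ℕ) (ρ S : Matrix (Fin d) (Fin d) ℂ)
    (hρ : ρᴴ = ρ) (β ω : ℝ)
    (hKMS : ρ * S = (Real.exp (β * ω) : ℂ) • (S * ρ)) :
    ∀ X Y : Matrix (Fin d) (Fin d) ℂ,
      Matrix.trace (ρ * Xᴴ * lindbladTerm S (Real.exp (-(β * ω))) Y) =
        Matrix.trace (ρ * (lindbladTerm S (Real.exp (-(β * ω))) X)ᴴ * Y) := by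
  intro X Y
  refine trace_mul_lindbladTerm_symm hρ hKMS ?_ (Complex.conj_ofReal _) X Y
  rw [← Complex.ofReal_mul, ← Real.exp_add, neg_add_cancel, Real.exp_zero, Complex.ofReal_one]
end

section
/- Let V be a finite-dimensional complex inner product space, let L : V → V be a self-adjoint linear map with re⟨Y, L Y⟩ ≤ 0 for all Y ∈ V, and let X ∈ V be nonzero with −re⟨X, L X⟩ ≤ ε·⟨X, X⟩ for some ε ≥ 0. Then for every real t ≥ 0, re⟨X, exp(t·L) X⟩ ≥ e^{−εt}·⟨X, X⟩. -/
/-!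
Diagonalise `L` in an orthonormal eigenbasis `bᵢ` with eigenvalues `μᵢ`, and put
`pᵢ = ‖⟪bᵢ, X⟫‖²`. Then `⟪X, X⟫ = ∑ pᵢ`, `re⟪X, L X⟫ = ∑ μᵢ pᵢ` and
`re⟪X, e^{tL} X⟫ = ∑ e^{tμᵢ} pᵢ`, so the claim is a statement about the exponential function
alone. It follows by bounding `e^{tμᵢ}` below by the tangent line of `exp` at `-εt` and summing
against the weights `pᵢ`.
-/

open scoped InnerProductSpace

theorem NormedSpace.exp_apply_of_apply_eq_smul {𝕂 V : Type*} [RCLike 𝕂] [NormedAddCommGroup V]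
    [NormedSpace 𝕂 V] [CompleteSpace V] {A : V →L[𝕂] V} {v : V} {c : 𝕂} (h : A v = c • v) :
    NormedSpace.exp A v = NormedSpace.exp c • v := by
  have hpow : ∀ n : ℕ, (A ^ n) v = c ^ n • v := by
    intro n
    induction n with
    | zero => simp
    | succ n ih => rw [pow_succ, mul_apply_eq_comp, h, map_smul, ih, smul_smul, pow_succ']
  have hA := (exp_series_hasSum_exp' (𝕂 := 𝕂) A).mapL (ContinuousLinearMap.apply 𝕂 V v)
  have hc := (exp_series_hasSum_exp' (𝕂 := 𝕂) c).smul_const v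
  refine hA.unique (hc.congr_fun fun n => ?_)
  simp [hpow, smul_smul]

theorem OrthonormalBasis.re_inner_self_apply_eq_sum {𝕜 V ι F : Type*} [RCLike 𝕜]
    [NormedAddCommGroup V] [InnerProductSpace 𝕜 V] [Fintype ι] [FunLike F V V]
    [LinearMapClass F 𝕜 V V] (b : OrthonormalBasis ι 𝕜 V) {A : F} {g : ι → ℝ}
    (hA : ∀ i, A (b i) = (g i : 𝕜) • b i) (v : V) :
    RCLike.re ⟪v, A v⟫_𝕜 = ∑ i, g i * ‖⟪b i, v⟫_𝕜‖ ^ 2 := by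
  have hAv : A v = ∑ i, ((g i : 𝕜) * ⟪b i, v⟫_𝕜) • b i := by
    conv_lhs => rw [← b.sum_repr' v]
    simp only [map_sum, map_smul, hA, smul_smul, mul_comm]
  rw [hAv, inner_sum, map_sum]
  refine Finset.sum_congr rfl fun i _ => ?_
  rw [inner_smul_right, ← inner_conj_symm v (b i), mul_assoc, RCLike.mul_conj]
  norm_cast

theorem Real.exp_neg_mul_sum_le_sum_exp_mul {ι : Type*} (s : Finset ι) {p μ : ι → ℝ}
    (hp : ∀ i ∈ s, 0 ≤ p i) {ε t : ℝ} (ht : 0 ≤ t)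
    (hgap : -(∑ i ∈ s, μ i * p i) ≤ ε * ∑ i ∈ s, p i) :
    exp (-(ε * t)) * ∑ i ∈ s, p i ≤ ∑ i ∈ s, exp (t * μ i) * p i := by
  have tangent : ∀ i, exp (-(ε * t)) * (t * μ i + ε * t + 1) ≤ exp (t * μ i) := by
    intro i
    calc exp (-(ε * t)) * (t * μ i + ε * t + 1)
        ≤ exp (-(ε * t)) * exp (t * μ i + ε * t) := by gcongr; exact add_one_le_exp _
      _ = exp (t * μ i) := by rw [← exp_add]; ring_nf
  calc exp (-(ε * t)) * ∑ i ∈ s, p i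
      ≤ exp (-(ε * t)) * (∑ i ∈ s, p i + t * (∑ i ∈ s, μ i * p i + ε * ∑ i ∈ s, p i)) := by
        gcongr
        exact le_add_of_nonneg_right (mul_nonneg ht (by linarith))
    _ = ∑ i ∈ s, exp (-(ε * t)) * (t * μ i + ε * t + 1) * p i := by
        simp only [Finset.mul_sum, ← Finset.sum_add_distrib]
        exact Finset.sum_congr rfl fun i _ => by ring
    _ ≤ ∑ i ∈ s, exp (t * μ i) * p i :=
        Finset.sum_le_sum fun i hi => mul_le_mul_of_nonneg_right (tangent i) (hp i hi)

theorem autocorrelation_lower_bound_general {V : Type*} [NormedAddCommGroup V]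
    [InnerProductSpace ℂ V] [FiniteDimensional ℂ V]
    (L : V →L[ℂ] V)
    (hsa : ∀ x y : V, (inner ℂ (L x) y : ℂ) = inner ℂ x (L y))
    (X : V) (ε : ℝ)
    (hgap : -(inner ℂ X (L X) : ℂ).re ≤ ε * (inner ℂ X X : ℂ).re) :
    ∀ t : ℝ, 0 ≤ t →
      Real.exp (-(ε * t)) * (inner ℂ X X : ℂ).re ≤
        (inner ℂ X (NormedSpace.exp (t • L) X) : ℂ).re := by
  intro t ht
  have hL : (L : V →ₗ[ℂ] V).IsSymmetric := hsa
  set b := hL.eigenvectorBasis rfl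
  set μ := hL.eigenvalues rfl
  have hLb : ∀ i, L (b i) = (μ i : ℂ) • b i := hL.apply_eigenvectorBasis rfl
  have hexpb : ∀ i, NormedSpace.exp (t • L) (b i) = (Real.exp (t * μ i) : ℂ) • b i := by
    intro i
    have htL : (t • L) (b i) = ((t * μ i : ℝ) : ℂ) • b i := by
      rw [smul_apply, hLb, Complex.ofReal_mul, mul_smul, ← Complex.coe_smul t]
    rw [NormedSpace.exp_apply_of_apply_eq_smul htL, ← Complex.exp_eq_exp_ℂ, Complex.ofReal_exp]
  have hXX : (inner ℂ X X : ℂ).re = ∑ i, ‖⟪b i, X⟫_ℂ‖ ^ 2 := by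
    rw [← RCLike.re_to_complex, inner_self_eq_norm_sq, b.sum_sq_norm_inner_right]
  rw [hXX, ← RCLike.re_to_complex, b.re_inner_self_apply_eq_sum hexpb]
  rw [hXX, ← RCLike.re_to_complex, b.re_inner_self_apply_eq_sum hLb] at hgap
  exact Real.exp_neg_mul_sum_le_sum_exp_mul _ (fun i _ => sq_nonneg _) ht hgap

/-- Stability criterion: if the self-adjoint generator `L` is negative and the nonzero
observable `X` satisfies `−re⟨X, L X⟩ ≤ ε⟨X, X⟩`, then its auto-correlation function does
not decay faster than `e^{−εt}`: `re⟨X, e^{tL} X⟩ ≥ e^{−εt}⟨X, X⟩` for all `t ≥ 0`. -/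
theorem autocorrelation_lower_bound {V : Type*} [NormedAddCommGroup V]
    [InnerProductSpace ℂ V] [FiniteDimensional ℂ V]
    (L : V →L[ℂ] V)
    (hsa : ∀ x y : V, (inner ℂ (L x) y : ℂ) = inner ℂ x (L y))
    (hneg : ∀ Y : V, (inner ℂ Y (L Y) : ℂ).re ≤ 0)
    (X : V) (hX : X ≠ 0) (ε : ℝ) (hε : 0 ≤ ε)
    (hgap : -(inner ℂ X (L X) : ℂ).re ≤ ε * (inner ℂ X X : ℂ).re) :
    ∀ t : ℝ, 0 ≤ t →
      Real.exp (-(ε * t)) * (inner ℂ X X : ℂ).re ≤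
        (inner ℂ X (NormedSpace.exp (t • L) X) : ℂ).re :=
  autocorrelation_lower_bound_general L hsa X ε hgap
end
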